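/- arXiv:1209.4703 — 7 statements merged into one kernel-verified Lean document; each statement's English description precedes it below -/
import Mathlib

section
/- Let D be a probability distribution over price vectors p ∈ ℝ≥0^m and let v be a monotone subadditive valuation. If a bid vector b is drawn from the same distribution D, then E_{b∼D} E_{p∼D}[v(W(b,p))] ≥ (1/2)·v([m]), where W(b,p) = {j : b(j) ≥ p(j)} (ties broken by any fixed symmetric rule so that W(b,p) and W(p,b) partition [m]). -/
/-!
Every item is won by at least one of the bid vectors `b`, `p`, so monotonicity and subadditivity
give `v([m]) ≤ v(W(b,p)) + v(W(p,b))`. Since `b` and `p` are identically distributed, the two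
terms on the right have the same expectation, which is therefore at least `v([m]) / 2`.
-/

open Finset

theorem univ_le_filter_le_add_filter_ge {α β : Type*} [Fintype α] [DecidableEq α] [LinearOrder β]
    (v : Finset α → ℝ) (hmono : ∀ S T : Finset α, S ⊆ T → v S ≤ v T)
    (hsub : ∀ S T : Finset α, v (S ∪ T) ≤ v S + v T) (f g : α → β) :
    v univ ≤ v {j | g j ≤ f j} + v {j | f j ≤ g j} :=
  calc v univ ≤ v (({j | g j ≤ f j} : Finset α) ∪ ({j | f j ≤ g j} : Finset α)) :=
        hmono _ _ fun j _ => by simpa [mem_union] using le_total (g j) (f j)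
    _ ≤ _ := hsub _ _

theorem sum_sum_mul_mul_swap {ι R : Type*} [Fintype ι] [CommSemiring R] (μ : ι → R)
    (F : ι → ι → R) :
    ∑ i, ∑ k, μ i * μ k * F k i = ∑ i, ∑ k, μ i * μ k * F i k := by
  rw [sum_comm]
  simp_rw [mul_comm (μ _) (μ _)]

theorem le_two_mul_sum_sum_of_le_add_swap {ι : Type*} [Fintype ι] (μ : ι → ℝ)
    (hμ0 : ∀ i, 0 ≤ μ i) (hμ1 : ∑ i, μ i = 1) (F : ι → ι → ℝ) (c : ℝ)
    (hF : ∀ i k, c ≤ F i k + F k i) :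
    c ≤ 2 * ∑ i, ∑ k, μ i * μ k * F i k :=
  calc c = ∑ i, ∑ k, μ i * μ k * c := by
        simp_rw [mul_assoc, ← mul_sum, ← sum_mul, hμ1, one_mul]
    _ ≤ ∑ i, ∑ k, μ i * μ k * (F i k + F k i) :=
        sum_le_sum fun i _ => sum_le_sum fun k _ =>
          mul_le_mul_of_nonneg_left (hF i k) (mul_nonneg (hμ0 i) (hμ0 k))
    _ = 2 * ∑ i, ∑ k, μ i * μ k * F i k := by
        simp_rw [mul_add, sum_add_distrib, sum_sum_mul_mul_swap μ F]
        ring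

theorem stmt1_general (m N : ℕ) (v : Finset (Fin m) → ℝ)
    (hmono : ∀ S T : Finset (Fin m), S ⊆ T → v S ≤ v T)
    (hsub : ∀ S T : Finset (Fin m), v (S ∪ T) ≤ v S + v T)
    (D : Fin N → Fin m → ℝ)
    (μ : Fin N → ℝ) (hμ0 : ∀ i, 0 ≤ μ i) (hμ1 : ∑ i, μ i = 1) :
    (1 / 2) * v Finset.univ ≤
      ∑ i, ∑ k, μ i * μ k * v (Finset.univ.filter fun j => D k j ≤ D i j) := by
  have h := le_two_mul_sum_sum_of_le_add_swap μ hμ0 hμ1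
    (fun i k => v {j | D k j ≤ D i j}) (v univ)
    fun i k => univ_le_filter_le_add_filter_ge v hmono hsub (D i) (D k)
  linarith

/-- If a bid vector `b` is drawn from the same (finitely supported) distribution `D` as the
prices `p`, then for a monotone subadditive `v`,
`E_{b∼D} E_{p∼D} [v(W(b,p))] ≥ (1/2) v([m])`, where `W(b,p) = {j : b j ≥ p j}`. -/
theorem stmt1 (m N : ℕ) (v : Finset (Fin m) → ℝ)
    (hnn : ∀ S, 0 ≤ v S)
    (hmono : ∀ S T : Finset (Fin m), S ⊆ T → v S ≤ v T)
    (hsub : ∀ S T : Finset (Fin m), v (S ∪ T) ≤ v S + v T)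
    (D : Fin N → Fin m → ℝ) (hD : ∀ i j, 0 ≤ D i j)
    (μ : Fin N → ℝ) (hμ0 : ∀ i, 0 ≤ μ i) (hμ1 : ∑ i, μ i = 1) :
    (1 / 2) * v Finset.univ ≤
      ∑ i, ∑ k, μ i * μ k * v (Finset.univ.filter fun j => D k j ≤ D i j) :=
  stmt1_general m N v hmono hsub D μ hμ0 hμ1
end

section
/- For any finitely supported distribution D over price vectors p ∈ ℝ≥0^m and any monotone subadditive valuation v, there exists a bid vector b₀ ∈ ℝ≥0^m such that E_{p∼D}[v(W(b₀,p))] − Σ_j b₀(j) ≥ (1/2)·v([m]) − E_{p∼D}[Σ_j p(j)]. -/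
/-!
Bid a price vector `D i` drawn from the support itself. For two price vectors `p, q` every
item is won either by bidding `p` against `q` or by bidding `q` against `p`, so by
subadditivity the two winning sets have total value at least `v [m]`. Averaging over
independent `i, k` shows that a random bid `D i` wins expected value at least `v [m] / 2`
while paying `E[Σ_j p j]`; the best support point does at least as well as the average.
-/

open Finset

/-- The paper's `W(b, p)`. -/
def winners {ι α : Type*} [Fintype ι] [LE α] [DecidableLE α] (b p : ι → α) : Finset ι :=
  univ.filter fun j => p j ≤ b j

section Winners

variable {ι α : Type*} [Fintype ι] [DecidableEq ι] [LinearOrder α]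

theorem winners_union_winners_swap (a b : ι → α) : winners a b ∪ winners b a = univ := by
  ext j
  simp [winners, le_total]

theorem le_add_winners_swap (v : Finset ι → ℝ)
    (hsub : ∀ S T, v (S ∪ T) ≤ v S + v T) (a b : ι → α) :
    v univ ≤ v (winners a b) + v (winners b a) := by
  calc v univ = v (winners a b ∪ winners b a) := by rw [winners_union_winners_swap]
    _ ≤ v (winners a b) + v (winners b a) := hsub _ _

end Winners

section Averaging

variable {ι : Type*} [Fintype ι] {μ : ι → ℝ}

theorem exists_weightedSum_le (hμ0 : ∀ i, 0 ≤ μ i) (hμ1 : ∑ i, μ i = 1) (f : ι → ℝ) :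
    ∃ i, ∑ k, μ k * f k ≤ f i := by
  have hne : (univ : Finset ι).Nonempty := by
    by_contra h
    simp [not_nonempty_iff_eq_empty.mp h] at hμ1
  obtain ⟨i, -, hi⟩ := exists_max_image univ f hne
  refine ⟨i, ?_⟩
  calc ∑ k, μ k * f k ≤ ∑ k, μ k * f i :=
        sum_le_sum fun k hk => mul_le_mul_of_nonneg_left (hi k hk) (hμ0 k)
    _ = f i := by rw [← sum_mul, hμ1, one_mul]

theorem half_le_weightedSum_of_le_add_swap (hμ0 : ∀ i, 0 ≤ μ i) (hμ1 : ∑ i, μ i = 1)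
    (g : ι → ι → ℝ) (c : ℝ) (hg : ∀ i k, c ≤ g i k + g k i) :
    c / 2 ≤ ∑ i, μ i * ∑ k, μ k * g i k := by
  have hswap : ∑ i, μ i * ∑ k, μ k * g k i = ∑ i, μ i * ∑ k, μ k * g i k := by
    simp only [mul_sum]
    rw [sum_comm]
    exact sum_congr rfl fun i _ => sum_congr rfl fun k _ => by ring
  have hc : c = ∑ i, μ i * ∑ k, μ k * c := by
    simp only [← sum_mul, hμ1, one_mul]
  have hle : ∑ i, μ i * ∑ k, μ k * c ≤ ∑ i, μ i * ∑ k, μ k * (g i k + g k i) :=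
    sum_le_sum fun i _ => mul_le_mul_of_nonneg_left
      (sum_le_sum fun k _ => mul_le_mul_of_nonneg_left (hg i k) (hμ0 k)) (hμ0 i)
  simp only [mul_add, sum_add_distrib, hswap] at hle
  linarith

end Averaging

theorem stmt2_general (m N : ℕ) (v : Finset (Fin m) → ℝ)
    (hsub : ∀ S T : Finset (Fin m), v (S ∪ T) ≤ v S + v T)
    (D : Fin N → Fin m → ℝ) (hD : ∀ i j, 0 ≤ D i j)
    (μ : Fin N → ℝ) (hμ0 : ∀ i, 0 ≤ μ i) (hμ1 : ∑ i, μ i = 1) :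
    ∃ b₀ : Fin m → ℝ, (∀ j, 0 ≤ b₀ j) ∧
      (1 / 2) * v Finset.univ - ∑ k, μ k * ∑ j, D k j ≤
        (∑ k, μ k * v (Finset.univ.filter fun j => D k j ≤ b₀ j)) - ∑ j, b₀ j := by
  let utility : Fin N → ℝ := fun i => ∑ k, μ k * v (winners (D i) (D k)) - ∑ j, D i j
  obtain ⟨i, hi⟩ := exists_weightedSum_le hμ0 hμ1 utility
  have hvalue : v univ / 2 ≤ ∑ i, μ i * ∑ k, μ k * v (winners (D i) (D k)) :=
    half_le_weightedSum_of_le_add_swap hμ0 hμ1 _ _ fun i k => le_add_winners_swap v hsub _ _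
  have hutility : ∑ i, μ i * utility i =
      ∑ i, μ i * ∑ k, μ k * v (winners (D i) (D k)) - ∑ k, μ k * ∑ j, D k j := by
    simp only [utility, mul_sub, sum_sub_distrib]
  refine ⟨D i, hD i, ?_⟩
  change _ ≤ utility i
  linarith

/-- For any finitely supported distribution over price vectors and any monotone subadditive `v`,
there exists a bid vector `b₀` with
`E_p[v(W(b₀,p))] − Σ_j b₀ j ≥ (1/2) v([m]) − E_p[Σ_j p j]`. -/
theorem stmt2 (m N : ℕ) (v : Finset (Fin m) → ℝ)
    (hnn : ∀ S, 0 ≤ v S)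
    (hmono : ∀ S T : Finset (Fin m), S ⊆ T → v S ≤ v T)
    (hsub : ∀ S T : Finset (Fin m), v (S ∪ T) ≤ v S + v T)
    (D : Fin N → Fin m → ℝ) (hD : ∀ i j, 0 ≤ D i j)
    (μ : Fin N → ℝ) (hμ0 : ∀ i, 0 ≤ μ i) (hμ1 : ∑ i, μ i = 1) :
    ∃ b₀ : Fin m → ℝ, (∀ j, 0 ≤ b₀ j) ∧
      (1 / 2) * v Finset.univ - ∑ k, μ k * ∑ j, D k j ≤
        (∑ k, μ k * v (Finset.univ.filter fun j => D k j ≤ b₀ j)) - ∑ j, b₀ j :=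
  stmt2_general m N v hsub D hD μ hμ0 hμ1
end

section
/- Let v be monotone subadditive on 2^[m] and q ∈ ℝ≥0^m a price vector. Let T ⊆ [m] be a maximal (with respect to inclusion) set satisfying v(T) ≤ q(T). Then the truncated vector q̃, defined by q̃(j) = 0 for j ∈ T and q̃(j) = q(j) otherwise, is dominated by v: for every set S ⊆ [m], Σ_{j∈S} q̃(j) ≤ v(S). -/
open Finset

/-!
Remove from `S` the part already in `T`: the remaining set `U = S \ T` is disjoint from `T`, so if
it is nonempty then `T ∪ U` strictly contains `T` and maximality gives
`q(T) + q(U) < v(T ∪ U) ≤ v(T) + v(U)`. Together with `v(T) ≤ q(T)` this yields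
`q(U) < v(U) ≤ v(S)`.
-/

section MaximalSet

variable {α : Type*} [DecidableEq α] (v : Finset α → ℝ) (q : α → ℝ) {T : Finset α}

lemma sum_lt_of_disjoint_of_maximal (hsub : ∀ S T : Finset α, v (S ∪ T) ≤ v S + v T)
    (hT : v T ≤ ∑ j ∈ T, q j) (hmax : ∀ T' : Finset α, T ⊂ T' → ¬ v T' ≤ ∑ j ∈ T', q j)
    {U : Finset α} (hTU : Disjoint T U) (hU : U.Nonempty) :
    ∑ j ∈ U, q j < v U := by
  obtain ⟨x, hxU⟩ := hU
  have hssub : T ⊂ T ∪ U :=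
    ssubset_iff_of_subset subset_union_left |>.2 ⟨x, mem_union_right _ hxU, disjoint_right.1 hTU hxU⟩
  have hlt : ∑ j ∈ T, q j + ∑ j ∈ U, q j < v (T ∪ U) := by
    rw [← sum_union hTU]
    exact not_le.1 (hmax _ hssub)
  linarith [hsub T U]

lemma sum_sdiff_le_of_maximal (hnn : ∀ S, 0 ≤ v S) (hmono : ∀ S T : Finset α, S ⊆ T → v S ≤ v T)
    (hsub : ∀ S T : Finset α, v (S ∪ T) ≤ v S + v T)
    (hT : v T ≤ ∑ j ∈ T, q j) (hmax : ∀ T' : Finset α, T ⊂ T' → ¬ v T' ≤ ∑ j ∈ T', q j)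
    (S : Finset α) :
    ∑ j ∈ S \ T, q j ≤ v S := by
  rcases (S \ T).eq_empty_or_nonempty with hempty | hne
  · rw [hempty, sum_empty]
    exact hnn S
  · calc ∑ j ∈ S \ T, q j ≤ v (S \ T) :=
          (sum_lt_of_disjoint_of_maximal v q hsub hT hmax disjoint_sdiff hne).le
      _ ≤ v S := hmono _ _ sdiff_subset

end MaximalSet

lemma sum_ite_mem_zero_eq_sum_sdiff {α M : Type*} [DecidableEq α] [AddCommMonoid M]
    (S T : Finset α) (f : α → M) :
    (∑ j ∈ S, if j ∈ T then 0 else f j) = ∑ j ∈ S \ T, f j := by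
  rw [sdiff_eq_filter, sum_filter]
  exact sum_congr rfl fun j _ ↦ by by_cases h : j ∈ T <;> simp [h]

theorem stmt3_general (m : ℕ) (v : Finset (Fin m) → ℝ)
    (hnn : ∀ S, 0 ≤ v S)
    (hmono : ∀ S T : Finset (Fin m), S ⊆ T → v S ≤ v T)
    (hsub : ∀ S T : Finset (Fin m), v (S ∪ T) ≤ v S + v T)
    (q : Fin m → ℝ)
    (T : Finset (Fin m))
    (hT : v T ≤ ∑ j ∈ T, q j)
    (hmax : ∀ T' : Finset (Fin m), T ⊂ T' → ¬ v T' ≤ ∑ j ∈ T', q j) :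
    ∀ S : Finset (Fin m), (∑ j ∈ S, if j ∈ T then 0 else q j) ≤ v S := by
  intro S
  rw [sum_ite_mem_zero_eq_sum_sdiff]
  exact sum_sdiff_le_of_maximal v q hnn hmono hsub hT hmax S

/-- If `T` is a maximal set with `v(T) ≤ q(T)` for monotone subadditive `v`, then the
truncated price vector `q̃` (zero on `T`, equal to `q` off `T`) is dominated by `v`. -/
theorem stmt3 (m : ℕ) (v : Finset (Fin m) → ℝ)
    (hnn : ∀ S, 0 ≤ v S)
    (hmono : ∀ S T : Finset (Fin m), S ⊆ T → v S ≤ v T)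
    (hsub : ∀ S T : Finset (Fin m), v (S ∪ T) ≤ v S + v T)
    (q : Fin m → ℝ) (hq : ∀ j, 0 ≤ q j)
    (T : Finset (Fin m))
    (hT : v T ≤ ∑ j ∈ T, q j)
    (hmax : ∀ T' : Finset (Fin m), T ⊂ T' → ¬ v T' ≤ ∑ j ∈ T', q j) :
    ∀ S : Finset (Fin m), (∑ j ∈ S, if j ∈ T then 0 else q j) ≤ v S :=
  stmt3_general m v hnn hmono hsub q T hT hmax
end

section
/- With v, q, T, q̃ as in the truncation construction (T a maximal set with v(T) ≤ q(T), and q̃ the truncation of q to zero on T), for every bid vector b: v(W(b,q)) + q([m]) ≥ v(W(b,q̃)) + q̃([m]). -/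
open Finset

/-! Every item that wins against `q̃` but not against `q` lies in `T`, so by monotonicity and
subadditivity `v(W(b,q̃)) ≤ v(W(b,q)) + v(T)`. Truncating `q` on `T` lowers the total price by
exactly `q(T) ≥ v(T)`, which pays for this gain. -/

section

variable {α : Type*}

theorem sum_ite_mem_zero_add_sum {M : Type*} [AddCommMonoid M] [Fintype α] [DecidableEq α]
    (T : Finset α) (q : α → M) :
    (∑ j, if j ∈ T then 0 else q j) + ∑ j ∈ T, q j = ∑ j, q j := by
  rw [← sum_ite_mem_eq T q, ← sum_add_distrib]
  exact sum_congr rfl fun j _ => by split_ifs <;> simp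

theorem filter_ite_mem_zero_le_subset_union {M : Type*} [Zero M] [LE M] [DecidableLE M]
    [Fintype α] [DecidableEq α] (T : Finset α) (q b : α → M) :
    (univ.filter fun j => (if j ∈ T then 0 else q j) ≤ b j) ⊆
      (univ.filter fun j => q j ≤ b j) ∪ T := by
  intro j hj
  by_cases hjT : j ∈ T
  · exact mem_union_right _ hjT
  · simp_all

theorem le_add_of_subset_union {β : Type*} [Add β] [Preorder β] [DecidableEq α]
    {v : Finset α → β} (hmono : ∀ S T : Finset α, S ⊆ T → v S ≤ v T)
    (hsub : ∀ S T : Finset α, v (S ∪ T) ≤ v S + v T) {S A B : Finset α}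
    (h : S ⊆ A ∪ B) :
    v S ≤ v A + v B :=
  (hmono _ _ h).trans (hsub A B)

end

theorem stmt4_general (m : ℕ) (v : Finset (Fin m) → ℝ)
    (hmono : ∀ S T : Finset (Fin m), S ⊆ T → v S ≤ v T)
    (hsub : ∀ S T : Finset (Fin m), v (S ∪ T) ≤ v S + v T)
    (q : Fin m → ℝ)
    (T : Finset (Fin m))
    (hT : v T ≤ ∑ j ∈ T, q j)
    (b : Fin m → ℝ) :
    v (Finset.univ.filter fun j => (if j ∈ T then 0 else q j) ≤ b j) +
        (∑ j, if j ∈ T then 0 else q j) ≤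
      v (Finset.univ.filter fun j => q j ≤ b j) + ∑ j, q j := by
  have hwin := le_add_of_subset_union hmono hsub (filter_ite_mem_zero_le_subset_union T q b)
  have hprice := sum_ite_mem_zero_add_sum T q
  linarith

/-- With `T` a maximal set satisfying `v(T) ≤ q(T)` and `q̃` the truncation of `q` to zero on
`T`, for every bid vector `b`: `v(W(b,q)) + q([m]) ≥ v(W(b,q̃)) + q̃([m])`. -/
theorem stmt4 (m : ℕ) (v : Finset (Fin m) → ℝ)
    (hnn : ∀ S, 0 ≤ v S)
    (hmono : ∀ S T : Finset (Fin m), S ⊆ T → v S ≤ v T)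
    (hsub : ∀ S T : Finset (Fin m), v (S ∪ T) ≤ v S + v T)
    (q : Fin m → ℝ) (hq : ∀ j, 0 ≤ q j)
    (T : Finset (Fin m))
    (hT : v T ≤ ∑ j ∈ T, q j)
    (hmax : ∀ T' : Finset (Fin m), T ⊂ T' → ¬ v T' ≤ ∑ j ∈ T', q j)
    (b : Fin m → ℝ) :
    v (Finset.univ.filter fun j => (if j ∈ T then 0 else q j) ≤ b j) +
        (∑ j, if j ∈ T then 0 else q j) ≤
      v (Finset.univ.filter fun j => q j ≤ b j) + ∑ j, q j :=
  stmt4_general m v hmono hsub q T hT b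
end

section
/- For any finitely supported distribution D over price vectors in ℝ≥0^m and any monotone subadditive valuation v, there exists a bid vector b₀ that is dominated by v (i.e., Σ_{j∈S} b₀(j) ≤ v(S) for all S) and satisfies E_{p∼D}[v(W(b₀,p))] − Σ_j b₀(j) ≥ (1/2)·v([m]) − E_{p∼D}[Σ_j p(j)]. -/
/-!
Zero a price vector `q` on a largest set `T_q` with `v T_q ≤ q(T_q)`; maximality and
subadditivity make the truncated vector `q̃` dominated by `v`. For two price vectors `q, q'`,
each item lies in `T_q ∪ T_q'` or is won by `q̃` against `q'` or by `q̃'` against `q`, so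
`v [m] ≤ v (W(q̃, q')) + v (W(q̃', q)) + q(T_q) + q'(T_q')`. Averaging over independent
`q, q' ∼ D` and using `Σ q̃ = Σ q - q(T_q)`, the expected utility of `q̃` for `q ∼ D` is at
least `v [m] / 2 - E Σ p`, so some `q̃` in the support does as well.
-/

open Finset

section Truncation

variable {ι : Type*} (v : Finset ι → ℝ)

/-- `T = ∅` stands in when no set satisfies `v S ≤ q(S)` (possible only if `0 < v ∅`). -/
def IsTruncationSet (q : ι → ℝ) (T : Finset ι) : Prop :=
  (v T ≤ ∑ j ∈ T, q j ∨ T = ∅) ∧ ∀ S, v S ≤ ∑ j ∈ S, q j → #S ≤ #T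

theorem exists_isTruncationSet [Fintype ι] (q : ι → ℝ) : ∃ T, IsTruncationSet v q T := by
  set F := univ.filter fun S : Finset ι => v S ≤ ∑ j ∈ S, q j
  by_cases hF : F.Nonempty
  · obtain ⟨T, hT, hmax⟩ := F.exists_max_image card hF
    exact ⟨T, .inl (mem_filter.1 hT).2, fun S hS => hmax S (by simpa [F] using hS)⟩
  · exact ⟨∅, .inr rfl, fun S hS => absurd ⟨S, by simpa [F] using hS⟩ hF⟩

variable {v} {q : ι → ℝ} {T : Finset ι}

theorem IsTruncationSet.union_le [DecidableEq ι] (hsub : ∀ S T, v (S ∪ T) ≤ v S + v T)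
    (hT : IsTruncationSet v q T) (X : Finset ι) : v (X ∪ T) ≤ v X + ∑ j ∈ T, q j := by
  rcases hT.1 with h | rfl
  · linarith [hsub X T]
  · simp

def truncate [DecidableEq ι] (q : ι → ℝ) (T : Finset ι) (j : ι) : ℝ :=
  if j ∈ T then 0 else q j

theorem sum_truncate [DecidableEq ι] (S : Finset ι) :
    ∑ j ∈ S, truncate q T j = ∑ j ∈ S \ T, q j := by
  rw [sdiff_eq_filter, sum_filter]
  exact sum_congr rfl fun j _ => by by_cases h : j ∈ T <;> simp [truncate, h]

theorem truncate_nonneg [DecidableEq ι] (hq : ∀ j, 0 ≤ q j) (j : ι) :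
    0 ≤ truncate q T j := by
  unfold truncate; split_ifs
  exacts [le_rfl, hq j]

theorem IsTruncationSet.sum_truncate_le [DecidableEq ι] (h0 : 0 ≤ v ∅)
    (hmono : ∀ S T, S ⊆ T → v S ≤ v T) (hsub : ∀ S T, v (S ∪ T) ≤ v S + v T)
    (hT : IsTruncationSet v q T) (S : Finset ι) : ∑ j ∈ S, truncate q T j ≤ v S := by
  rw [sum_truncate]
  by_contra! hlt
  have hU : v (S \ T) < ∑ j ∈ S \ T, q j := (hmono _ _ sdiff_subset).trans_lt hlt
  -- `S \ T` could be added to `T`, so maximality forces it to be empty, and then `v ∅ < 0`.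
  have hempty : S \ T = ∅ := by
    rcases hT.1 with hTq | rfl
    · have hunion : v (T ∪ S \ T) ≤ ∑ j ∈ T ∪ S \ T, q j := by
        rw [sum_union disjoint_sdiff]
        linarith [hsub T (S \ T)]
      have := eq_of_subset_of_card_le subset_union_left (hT.2 _ hunion)
      rwa [eq_comm, union_eq_left, ← sdiff_eq_empty_iff_subset, Finset.sdiff_idem] at this
    · simpa using hT.2 _ hU.le
  rw [hempty, sum_empty] at hU
  linarith

theorem sum_truncate_univ [Fintype ι] [DecidableEq ι] :
    ∑ j, truncate q T j = ∑ j, q j - ∑ j ∈ T, q j := by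
  rw [sum_truncate, eq_sub_iff_add_eq, sum_sdiff (subset_univ T)]

noncomputable def winSet [Fintype ι] (b p : ι → ℝ) : Finset ι :=
  univ.filter fun j => p j ≤ b j

theorem univ_subset_winSet_union [Fintype ι] [DecidableEq ι] (q q' : ι → ℝ)
    (T T' : Finset ι) :
    univ ⊆ winSet (truncate q T) q' ∪ winSet (truncate q' T') q ∪ T ∪ T' := by
  intro j _
  by_cases hj : j ∈ T; · simp [hj]
  by_cases hj' : j ∈ T'; · simp [hj']
  simp only [winSet, mem_union, mem_filter, mem_univ, true_and, hj, hj', or_false]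
  simp only [truncate, hj, hj', if_false]
  exact le_total (q' j) (q j)

theorem IsTruncationSet.le_winSet_add_winSet [Fintype ι] [DecidableEq ι]
    (hmono : ∀ S T, S ⊆ T → v S ≤ v T) (hsub : ∀ S T, v (S ∪ T) ≤ v S + v T)
    {q' : ι → ℝ} {T' : Finset ι}
    (hT : IsTruncationSet v q T) (hT' : IsTruncationSet v q' T') :
    v univ ≤ v (winSet (truncate q T) q') + v (winSet (truncate q' T') q)
      + ∑ j ∈ T, q j + ∑ j ∈ T', q' j := by
  calc v univ ≤ v (winSet (truncate q T) q' ∪ winSet (truncate q' T') q ∪ T ∪ T') :=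
        hmono _ _ (univ_subset_winSet_union q q' T T')
    _ ≤ v (winSet (truncate q T) q' ∪ winSet (truncate q' T') q) + ∑ j ∈ T, q j
        + ∑ j ∈ T', q' j := by
      linarith [hT'.union_le hsub (winSet (truncate q T) q' ∪ winSet (truncate q' T') q ∪ T),
        hT.union_le hsub (winSet (truncate q T) q' ∪ winSet (truncate q' T') q)]
    _ ≤ _ := by linarith [hsub (winSet (truncate q T) q') (winSet (truncate q' T') q)]

end Truncation

section Averaging

variable {κ : Type*} [Fintype κ] {μ : κ → ℝ}

theorem le_two_mul_expectation_of_le_symm (hμ0 : ∀ k, 0 ≤ μ k) (hμ1 : ∑ k, μ k = 1)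
    {a : ℝ} {f : κ → κ → ℝ} {c : κ → ℝ}
    (h : ∀ k k', a ≤ f k k' + f k' k + c k + c k') :
    a ≤ 2 * ∑ k, μ k * ∑ k', μ k' * f k k' + 2 * ∑ k, μ k * c k := by
  have hdouble : ∀ g : κ → κ → ℝ, ∑ k, μ k * ∑ k', μ k' * g k k' =
      ∑ k, ∑ k', μ k * μ k' * g k k' := fun g => by simp_rw [mul_sum, mul_assoc]
  have hswap : ∑ k, μ k * ∑ k', μ k' * f k' k = ∑ k, μ k * ∑ k', μ k' * f k k' := by
    rw [hdouble, hdouble, sum_comm]; simp_rw [mul_comm (μ _) (μ _)]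
  have hconst : ∀ x : ℝ, ∑ k, μ k * x = x := fun x => by rw [← sum_mul, hμ1, one_mul]
  calc a = ∑ k, μ k * ∑ k', μ k' * a := by rw [hconst, hconst]
    _ ≤ ∑ k, μ k * ∑ k', μ k' * (f k k' + f k' k + c k + c k') := by
      gcongr with k _ k' _
      exacts [hμ0 k, hμ0 k', h k k']
    _ = _ := by
      simp only [mul_add, sum_add_distrib, hconst]
      rw [hswap]; ring

theorem exists_le_of_le_expectation (hμ0 : ∀ k, 0 ≤ μ k) (hμ1 : ∑ k, μ k = 1)
    {a : ℝ} {u : κ → ℝ} (h : a ≤ ∑ k, μ k * u k) : ∃ k, a ≤ u k := by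
  obtain ⟨k, -, hk⟩ := univ.exists_max_image u
    (nonempty_of_sum_ne_zero (hμ1 ▸ one_ne_zero : ∑ k, μ k ≠ 0))
  refine ⟨k, h.trans ?_⟩
  calc ∑ k, μ k * u k ≤ ∑ k', μ k' * u k := sum_le_sum fun k' _ =>
        mul_le_mul_of_nonneg_left (hk k' (mem_univ _)) (hμ0 k')
    _ = u k := by rw [← sum_mul, hμ1, one_mul]

end Averaging

/-- For any finitely supported distribution over price vectors and any monotone subadditive `v`,
there exists a bid vector `b₀` dominated by `v` (no overbidding) with
`E_p[v(W(b₀,p))] − Σ_j b₀ j ≥ (1/2) v([m]) − E_p[Σ_j p j]`. -/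
theorem stmt5 (m N : ℕ) (v : Finset (Fin m) → ℝ)
    (hnn : ∀ S, 0 ≤ v S)
    (hmono : ∀ S T : Finset (Fin m), S ⊆ T → v S ≤ v T)
    (hsub : ∀ S T : Finset (Fin m), v (S ∪ T) ≤ v S + v T)
    (D : Fin N → Fin m → ℝ) (hD : ∀ i j, 0 ≤ D i j)
    (μ : Fin N → ℝ) (hμ0 : ∀ i, 0 ≤ μ i) (hμ1 : ∑ i, μ i = 1) :
    ∃ b₀ : Fin m → ℝ, (∀ j, 0 ≤ b₀ j) ∧
      (∀ S : Finset (Fin m), ∑ j ∈ S, b₀ j ≤ v S) ∧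
      (1 / 2) * v Finset.univ - ∑ k, μ k * ∑ j, D k j ≤
        (∑ k, μ k * v (Finset.univ.filter fun j => D k j ≤ b₀ j)) - ∑ j, b₀ j := by
  choose T hT using fun k => exists_isTruncationSet v (D k)
  set b := fun k => truncate (D k) (T k)
  set c := fun k => ∑ j ∈ T k, D k j
  have hcover (k k' : Fin N) :
      v univ ≤ v (winSet (b k) (D k')) + v (winSet (b k') (D k)) + c k + c k' :=
    (hT k).le_winSet_add_winSet hmono hsub (hT k')
  have havg := le_two_mul_expectation_of_le_symm hμ0 hμ1 hcover
  have hbids (k : Fin N) : ∑ j, b k j = ∑ j, D k j - c k := sum_truncate_univ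
  obtain ⟨k, hk⟩ := exists_le_of_le_expectation hμ0 hμ1
    (u := fun k => ∑ k', μ k' * v (winSet (b k) (D k')) - ∑ j, b k j)
    (a := 1 / 2 * v univ - ∑ k, μ k * ∑ j, D k j) (by
      simp only [mul_sub, sum_sub_distrib, hbids]
      linarith)
  exact ⟨b k, truncate_nonneg (hD k), (hT k).sum_truncate_le (hnn ∅) hmono hsub, hk⟩
end

section
/- For a fixed price vector p ∈ ℝ≥0^m and any monotone subadditive valuation v, there exists a bid vector b dominated by v such that v(W(b,p)) − Σ_j b(j) ≥ v([m]) − Σ_j p(j). -/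
/-!
Choose `T` maximizing the surplus `p(T) - v(T)`. Adding a set `S` disjoint from `T` cannot
increase the surplus, so subadditivity gives `p(S) ≤ v(T ∪ S) - v(T) ≤ v(S)`: prices are
dominated by `v` off `T`. Bidding `p` off `T` and `0` on `T` therefore gives a dominated bid
that wins `Tᶜ`, and `v(Tᶜ) ≥ v(univ) - v(T) ≥ v(univ) - p(T)` when the surplus of `T` is
nonnegative. If it is negative, `p` is dominated everywhere and bidding `p` wins everything.
-/

open Finset

section

variable {ι : Type*} [DecidableEq ι] {v : Finset ι → ℝ} {p : ι → ℝ} {T : Finset ι}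

lemma sum_le_of_disjoint_of_surplus_isMax (hsub : ∀ S U, v (S ∪ U) ≤ v S + v U)
    (hT : ∀ U, ∑ j ∈ U, p j - v U ≤ ∑ j ∈ T, p j - v T) {S : Finset ι} (hST : Disjoint T S) :
    ∑ j ∈ S, p j ≤ v S := by
  have h := hT (T ∪ S)
  rw [sum_union hST] at h
  linarith [hsub T S]

lemma sum_ite_mem_zero (S T : Finset ι) (p : ι → ℝ) :
    ∑ j ∈ S, (if j ∈ T then 0 else p j) = ∑ j ∈ S \ T, p j := by
  rw [sum_ite, sum_const_zero, zero_add, sdiff_eq_filter]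

lemma sum_ite_mem_zero_le_of_dominated (hmono : ∀ S U : Finset ι, S ⊆ U → v S ≤ v U)
    (hdom : ∀ S, Disjoint T S → ∑ j ∈ S, p j ≤ v S) (S : Finset ι) :
    ∑ j ∈ S, (if j ∈ T then 0 else p j) ≤ v S := by
  rw [sum_ite_mem_zero]
  exact (hdom _ disjoint_sdiff).trans (hmono _ _ sdiff_subset)

lemma sub_sum_le_utility_ite_mem_zero [Fintype ι] (hmono : ∀ S U : Finset ι, S ⊆ U → v S ≤ v U)
    (hsub : ∀ S U, v (S ∪ U) ≤ v S + v U) (hT : v T ≤ ∑ j ∈ T, p j) :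
    v univ - ∑ j, p j ≤
      v (univ.filter fun j => p j ≤ if j ∈ T then 0 else p j) -
        ∑ j, (if j ∈ T then 0 else p j) := by
  have hwin : Tᶜ ⊆ univ.filter fun j => p j ≤ if j ∈ T then 0 else p j := by
    intro j hj
    simp_all
  have hsplit : ∑ j, p j = ∑ j ∈ T, p j + ∑ j ∈ Tᶜ, p j := (sum_add_sum_compl T p).symm
  have hcover : v univ ≤ v T + v Tᶜ := by
    simpa only [union_compl] using hsub T Tᶜ
  rw [sum_ite_mem_zero, ← compl_eq_univ_sdiff]
  linarith [hmono _ _ hwin]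

end

theorem stmt6_general (m : ℕ) (v : Finset (Fin m) → ℝ)
    (hmono : ∀ S T : Finset (Fin m), S ⊆ T → v S ≤ v T)
    (hsub : ∀ S T : Finset (Fin m), v (S ∪ T) ≤ v S + v T)
    (p : Fin m → ℝ) (hp : ∀ j, 0 ≤ p j) :
    ∃ b : Fin m → ℝ, (∀ j, 0 ≤ b j) ∧
      (∀ S : Finset (Fin m), ∑ j ∈ S, b j ≤ v S) ∧
      v Finset.univ - ∑ j, p j ≤
        v (Finset.univ.filter fun j => p j ≤ b j) - ∑ j, b j := by
  obtain ⟨T, -, hT⟩ := exists_max_image (univ : Finset (Finset (Fin m)))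
    (fun U => ∑ j ∈ U, p j - v U) univ_nonempty
  replace hT : ∀ U, ∑ j ∈ U, p j - v U ≤ ∑ j ∈ T, p j - v T := fun U => hT U (mem_univ U)
  by_cases hsurplus : v T ≤ ∑ j ∈ T, p j
  · exact ⟨fun j => if j ∈ T then 0 else p j, fun j => ite_nonneg le_rfl (hp j),
      sum_ite_mem_zero_le_of_dominated hmono (fun S => sum_le_of_disjoint_of_surplus_isMax hsub hT),
      sub_sum_le_utility_ite_mem_zero hmono hsub hsurplus⟩
  · refine ⟨p, hp, fun S => by linarith [hT S], ?_⟩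
    simp

/-- For a fixed price vector `p` and any monotone subadditive `v`, there exists a bid `b`
dominated by `v` with `v(W(b,p)) − Σ_j b j ≥ v([m]) − Σ_j p j`. -/
theorem stmt6 (m : ℕ) (v : Finset (Fin m) → ℝ)
    (hnn : ∀ S, 0 ≤ v S)
    (hmono : ∀ S T : Finset (Fin m), S ⊆ T → v S ≤ v T)
    (hsub : ∀ S T : Finset (Fin m), v (S ∪ T) ≤ v S + v T)
    (p : Fin m → ℝ) (hp : ∀ j, 0 ≤ p j) :
    ∃ b : Fin m → ℝ, (∀ j, 0 ≤ b j) ∧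
      (∀ S : Finset (Fin m), ∑ j ∈ S, b j ≤ v S) ∧
      v Finset.univ - ∑ j, p j ≤
        v (Finset.univ.filter fun j => p j ≤ b j) - ∑ j, b j :=
  stmt6_general m v hmono hsub p hp
end

section
/- In a simultaneous first-price auction (complete-information, pure-strategy version): suppose n bidders with monotone subadditive valuations v_i play a pure bid profile b = (b₁,...,b_n) that is a Nash equilibrium (no bidder can strictly increase utility u_i(b) = v_i(W_i(b)) − Σ_{j∈W_i(b)} b_i(j) by any unilateral deviation). Then the social welfare Σ_i v_i(W_i(b)) is at least half of the optimal welfare max over partitions (O₁,...,O_n) of Σ_i v_i(O_i). -/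
/-!
In a pure Nash equilibrium each bidder `i` could instead bid, on the items of `O i`, the highest
competing bid and nothing elsewhere; this wins (at least) all of `O i` at total price
`∑ j ∈ O i, maxOther b i j`. Summing the equilibrium inequalities over `i`, the prices of these
deviations are bounded by the equilibrium revenue `∑ j, b (alloc j) j` (the `O i` are disjoint),
which is exactly what the winners pay, so the equilibrium welfare is at least `∑ i, v i (O i)`.
-/

open Finset

/-- The highest bid on item `j` among the bidders other than `i` (bids assumed nonnegative). -/
noncomputable def maxOther {n m : ℕ} (b : Fin n → Fin m → ℝ) (i : Fin n) (j : Fin m) : ℝ :=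
  (((Finset.univ.erase i).sup fun k => Real.toNNReal (b k j) : NNReal) : ℝ)

section Auction

variable {n m : ℕ} {b : Fin n → Fin m → ℝ}

theorem maxOther_nonneg (b : Fin n → Fin m → ℝ) (i : Fin n) (j : Fin m) :
    0 ≤ maxOther b i j :=
  NNReal.coe_nonneg _

theorem maxOther_le {i : Fin n} {j : Fin m} {x : ℝ} (hx : 0 ≤ x) (h : ∀ k, b k j ≤ x) :
    maxOther b i j ≤ x :=
  (NNReal.coe_le_coe.2 (Finset.sup_le fun k _ => Real.toNNReal_le_toNNReal (h k))).trans_eq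
    (Real.coe_toNNReal x hx)

theorem subset_filter_maxOther_le_piecewise (i : Fin n) (S : Finset (Fin m)) :
    S ⊆ univ.filter fun j => maxOther b i j ≤ S.piecewise (maxOther b i) 0 j := fun j hj => by
  simp [S.piecewise_eq_of_mem _ _ hj]

theorem sub_sum_maxOther_le_deviation {f : Finset (Fin m) → ℝ} (hf : Monotone f)
    (i : Fin n) (S : Finset (Fin m)) :
    f S - ∑ j ∈ S, maxOther b i j ≤
      f (univ.filter fun j => maxOther b i j ≤ S.piecewise (maxOther b i) 0 j) -
        ∑ j ∈ univ.filter (fun j => maxOther b i j ≤ S.piecewise (maxOther b i) 0 j),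
          S.piecewise (maxOther b i) 0 j := by
  have hS := subset_filter_maxOther_le_piecewise (b := b) i S
  have hpay : ∑ j ∈ univ.filter (fun j => maxOther b i j ≤ S.piecewise (maxOther b i) 0 j),
      S.piecewise (maxOther b i) 0 j = ∑ j ∈ S, maxOther b i j := by
    rw [sum_piecewise, inter_eq_right.2 hS]
    simp
  rw [hpay]
  linarith [hf hS]

theorem sum_sum_maxOther_le_revenue (hb : ∀ i j, 0 ≤ b i j) {alloc : Fin m → Fin n}
    (halloc : ∀ j k, b k j ≤ b (alloc j) j) {O : Fin n → Finset (Fin m)}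
    (hdisj : ∀ i k : Fin n, i ≠ k → Disjoint (O i) (O k)) :
    ∑ i, ∑ j ∈ O i, maxOther b i j ≤ ∑ j, b (alloc j) j :=
  calc ∑ i, ∑ j ∈ O i, maxOther b i j
      ≤ ∑ i, ∑ j ∈ O i, b (alloc j) j :=
        sum_le_sum fun _ _ => sum_le_sum fun j _ => maxOther_le (hb _ _) (halloc j)
    _ = ∑ j ∈ univ.biUnion O, b (alloc j) j :=
        (sum_biUnion fun i _ k _ => hdisj i k).symm
    _ ≤ ∑ j, b (alloc j) j := sum_le_univ_sum_of_nonneg fun _ => hb _ _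

theorem sum_sum_winningBids (alloc : Fin m → Fin n) :
    ∑ i, ∑ j ∈ univ.filter (fun j => alloc j = i), b i j = ∑ j, b (alloc j) j := by
  rw [← sum_fiberwise univ alloc fun j => b (alloc j) j]
  refine sum_congr rfl fun i _ => sum_congr rfl fun j hj => ?_
  rw [(mem_filter.1 hj).2]

theorem sum_le_welfare_of_isNash (v : Fin n → Finset (Fin m) → ℝ) (hmono : ∀ i, Monotone (v i))
    (hb : ∀ i j, 0 ≤ b i j) (alloc : Fin m → Fin n) (halloc : ∀ j k, b k j ≤ b (alloc j) j)
    (hNE : ∀ i (c : Fin m → ℝ), (∀ j, 0 ≤ c j) →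
      v i (univ.filter fun j => maxOther b i j ≤ c j) -
          (∑ j ∈ univ.filter fun j => maxOther b i j ≤ c j, c j) ≤
        v i (univ.filter fun j => alloc j = i) -
          (∑ j ∈ univ.filter fun j => alloc j = i, b i j))
    (O : Fin n → Finset (Fin m)) (hdisj : ∀ i k : Fin n, i ≠ k → Disjoint (O i) (O k)) :
    ∑ i, v i (O i) ≤ ∑ i, v i (univ.filter fun j => alloc j = i) := by
  have hdev : ∀ i, v i (O i) - ∑ j ∈ O i, maxOther b i j ≤
      v i (univ.filter fun j => alloc j = i) - ∑ j ∈ univ.filter (fun j => alloc j = i), b i j :=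
    fun i => (sub_sum_maxOther_le_deviation (hmono i) i (O i)).trans <|
      hNE i _ fun j => by
        by_cases hj : j ∈ O i <;> simp [hj, maxOther_nonneg]
  have hsum := sum_le_sum fun i (_ : i ∈ univ) => hdev i
  rw [sum_sub_distrib, sum_sub_distrib, sum_sum_winningBids] at hsum
  linarith [sum_sum_maxOther_le_revenue hb halloc hdisj]

end Auction

theorem stmt10_general (n m : ℕ) (v : Fin n → Finset (Fin m) → ℝ)
    (hnn : ∀ i S, 0 ≤ v i S)
    (hmono : ∀ i (S T : Finset (Fin m)), S ⊆ T → v i S ≤ v i T)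
    (b : Fin n → Fin m → ℝ) (hb : ∀ i j, 0 ≤ b i j)
    (alloc : Fin m → Fin n)
    (halloc : ∀ j k, b k j ≤ b (alloc j) j)
    (hNE : ∀ i (c : Fin m → ℝ), (∀ j, 0 ≤ c j) →
      v i (Finset.univ.filter fun j => maxOther b i j ≤ c j) -
          (∑ j ∈ Finset.univ.filter fun j => maxOther b i j ≤ c j, c j) ≤
        v i (Finset.univ.filter fun j => alloc j = i) -
          (∑ j ∈ Finset.univ.filter fun j => alloc j = i, b i j))
    (O : Fin n → Finset (Fin m))
    (hdisj : ∀ i k : Fin n, i ≠ k → Disjoint (O i) (O k)) :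
    ∑ i, v i (O i) ≤ 2 * ∑ i, v i (Finset.univ.filter fun j => alloc j = i) := by
  have hopt := sum_le_welfare_of_isNash v (fun i _ _ => hmono i _ _) hb alloc halloc hNE O hdisj
  have hwelfare_nonneg : 0 ≤ ∑ i, v i (univ.filter fun j => alloc j = i) :=
    sum_nonneg fun i _ => hnn i _
  linarith

/-- Pure Nash equilibria of simultaneous first-price auctions with monotone subadditive bidders
obtain at least half of the optimal welfare.  `alloc` is the (tie-broken) allocation of each
item to a highest bidder; bidder `i` wins `W_i = {j : alloc j = i}` and pays his own bids on it.
The equilibrium condition says that no bidder `i` can profit by deviating to a bid vector `c`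
(the deviation wins `{j : maxOther b i j ≤ c j}`, paying his bid on the items won). -/
theorem stmt10 (n m : ℕ) (v : Fin n → Finset (Fin m) → ℝ)
    (hnn : ∀ i S, 0 ≤ v i S)
    (hmono : ∀ i (S T : Finset (Fin m)), S ⊆ T → v i S ≤ v i T)
    (hsub : ∀ i (S T : Finset (Fin m)), v i (S ∪ T) ≤ v i S + v i T)
    (b : Fin n → Fin m → ℝ) (hb : ∀ i j, 0 ≤ b i j)
    (alloc : Fin m → Fin n)
    (halloc : ∀ j k, b k j ≤ b (alloc j) j)
    (hNE : ∀ i (c : Fin m → ℝ), (∀ j, 0 ≤ c j) →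
      v i (Finset.univ.filter fun j => maxOther b i j ≤ c j) -
          (∑ j ∈ Finset.univ.filter fun j => maxOther b i j ≤ c j, c j) ≤
        v i (Finset.univ.filter fun j => alloc j = i) -
          (∑ j ∈ Finset.univ.filter fun j => alloc j = i, b i j))
    (O : Fin n → Finset (Fin m))
    (hdisj : ∀ i k : Fin n, i ≠ k → Disjoint (O i) (O k))
    (hcover : Finset.univ.biUnion O = Finset.univ) :
    ∑ i, v i (O i) ≤ 2 * ∑ i, v i (Finset.univ.filter fun j => alloc j = i) :=
  stmt10_general n m v hnn hmono b hb alloc halloc hNE O hdisj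
end
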